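/- arXiv:1110.6269 — 2 statements merged into one kernel-verified Lean document; each statement's English description precedes it below -/
import Mathlib

section
/- Let E be a real normed space and D ⊊ E a domain. For any rectifiable curve γ : [0, L] → D parametrized by arc length, joining z₁ to z₂, the quasihyperbolic length satisfies ∫₀^L dt / dist(γ(t), ∂D) ≥ log(1 + L / dist(z₁, ∂D)) ≥ log(1 + |z₁ - z₂| / dist(z₁, ∂D)). -/
open Metric Set

variable {E : Type*} [NormedAddCommGroup E] [NormedSpace ℝ E]

/-- The quasihyperbolic length of a curve `γ : [0, L] → D` parametrized by
arc length (1-Lipschitz), in the domain `D`: `∫₀^L dt / dist(γ t, Dᶜ)`. -/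
noncomputable def qhLength (D : Set E) (γ : ℝ → E) (L : ℝ) : ℝ :=
  ∫ t in (0:ℝ)..L, 1 / infDist (γ t) Dᶜ

/-- `γ : [0, L] → D` is an admissible (rectifiable, arc-length parametrized)
curve joining `x` to `y` in `D`. -/
def IsQHPath (D : Set E) (x y : E) (γ : ℝ → E) (L : ℝ) : Prop :=
  0 ≤ L ∧ LipschitzOnWith 1 γ (Icc 0 L) ∧ γ 0 = x ∧ γ L = y ∧
    ∀ t ∈ Icc 0 L, γ t ∈ D

/-- The quasihyperbolic distance in the domain `D`: the infimum of
quasihyperbolic lengths of rectifiable curves joining `x` and `y` in `D`. -/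
noncomputable def qhDist (D : Set E) (x y : E) : ℝ :=
  ⨅ p : {p : (ℝ → E) × ℝ // IsQHPath D x y p.1 p.2}, qhLength D p.1.1 p.1.2

/-- The `j`-metric of the domain `D`. -/
noncomputable def jDist (D : Set E) (x y : E) : ℝ :=
  Real.log (1 + ‖x - y‖ / min (infDist x Dᶜ) (infDist y Dᶜ))

/- Along a curve parametrized by arc length, the distance to the boundary grows at most
linearly: `dist(γ t, ∂D) ≤ dist(z₁, ∂D) + t`. Hence the quasihyperbolic integrand dominates
`1 / (dist(z₁, ∂D) + t)`, whose integral over `[0, L]` is `log (1 + L / dist(z₁, ∂D))`;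
the second inequality is monotonicity of `log` together with `|z₁ - z₂| ≤ L`. -/

theorem integral_one_div_const_add {d L : ℝ} (hd : 0 < d) (hL : 0 ≤ L) :
    ∫ t in (0:ℝ)..L, 1 / (d + t) = Real.log (1 + L / d) := by
  rw [intervalIntegral.integral_comp_add_left (fun x => 1 / x) d, add_zero,
    integral_one_div fun h => by linarith [(uIcc_of_le (by linarith : d ≤ d + L) ▸ h).1]]
  congr 1
  field_simp

theorem LipschitzOnWith.infDist_le_infDist_add {X : Type*} [PseudoMetricSpace X]
    {γ : ℝ → X} {L t : ℝ}
    (hγ : LipschitzOnWith 1 γ (Icc 0 L)) (ht : t ∈ Icc 0 L) (S : Set X) :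
    infDist (γ t) S ≤ infDist (γ 0) S + t := by
  have h := hγ.dist_le_mul t ht 0 ⟨le_rfl, ht.1.trans ht.2⟩
  rw [NNReal.coe_one, one_mul, Real.dist_eq, sub_zero, abs_of_nonneg ht.1] at h
  linarith [infDist_le_infDist_add_dist (x := γ t) (y := γ 0) (s := S)]

theorem LipschitzOnWith.log_one_add_div_infDist_le_integral {X : Type*}
    [PseudoMetricSpace X] {γ : ℝ → X} {L : ℝ} {S : Set X}
    (hS : IsClosed S) (hL : 0 ≤ L) (hγ : LipschitzOnWith 1 γ (Icc 0 L))
    (hγS : ∀ t ∈ Icc 0 L, γ t ∉ S) :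
    Real.log (1 + L / infDist (γ 0) S) ≤ ∫ t in (0:ℝ)..L, 1 / infDist (γ t) S := by
  rcases S.eq_empty_or_nonempty with rfl | hne
  · -- `infDist _ ∅ = 0`, so both sides are `0`
    simp
  have hpos : ∀ t ∈ Icc 0 L, 0 < infDist (γ t) S := fun t ht =>
    (hS.notMem_iff_infDist_pos hne).1 (hγS t ht)
  have hd := hpos 0 ⟨le_rfl, hL⟩
  have hint : IntervalIntegrable (fun t => 1 / infDist (γ t) S) MeasureTheory.volume 0 L := by
    refine ContinuousOn.intervalIntegrable ?_
    rw [uIcc_of_le hL]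
    exact continuousOn_const.div ((continuous_infDist_pt S).comp_continuousOn hγ.continuousOn)
      fun t ht => (hpos t ht).ne'
  have hint' :
      IntervalIntegrable (fun t => 1 / (infDist (γ 0) S + t)) MeasureTheory.volume 0 L := by
    refine ContinuousOn.intervalIntegrable (continuousOn_const.div (by fun_prop) fun t ht => ?_)
    rw [uIcc_of_le hL] at ht
    linarith [ht.1]
  rw [← integral_one_div_const_add hd hL]
  exact intervalIntegral.integral_mono_on hL hint' hint fun t ht =>
    one_div_le_one_div_of_le (hpos t ht) (hγ.infDist_le_infDist_add ht S)

theorem stmt_5_general (D : Set E) (hD : IsOpen D)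
    (z₁ z₂ : E) (L : ℝ) (γ : ℝ → E)
    (hpath : IsQHPath D z₁ z₂ γ L) :
    Real.log (1 + L / infDist z₁ Dᶜ) ≤ qhLength D γ L ∧
    Real.log (1 + ‖z₁ - z₂‖ / infDist z₁ Dᶜ) ≤
      Real.log (1 + L / infDist z₁ Dᶜ) := by
  obtain ⟨hL, hγ, rfl, rfl, hγD⟩ := hpath
  have hchord : ‖γ 0 - γ L‖ ≤ L := by
    simpa [dist_eq_norm, Real.dist_eq, abs_of_nonneg hL] using
      hγ.dist_le_mul 0 ⟨le_rfl, hL⟩ L ⟨hL, le_rfl⟩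
  refine ⟨hγ.log_one_add_div_infDist_le_integral hD.isClosed_compl hL
    fun t ht => notMem_compl_iff.2 (hγD t ht), ?_⟩
  have hd : 0 ≤ infDist (γ 0) Dᶜ := infDist_nonneg
  exact Real.log_le_log (add_pos_of_pos_of_nonneg one_pos (div_nonneg (norm_nonneg _) hd))
    (by gcongr)

theorem stmt_5 (D : Set E) (hD : IsOpen D) (hconn : IsConnected D)
    (hne : D ≠ univ) (z₁ z₂ : E) (L : ℝ) (γ : ℝ → E)
    (hpath : IsQHPath D z₁ z₂ γ L) :
    Real.log (1 + L / infDist z₁ Dᶜ) ≤ qhLength D γ L ∧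
    Real.log (1 + ‖z₁ - z₂‖ / infDist z₁ Dᶜ) ≤
      Real.log (1 + L / infDist z₁ Dᶜ) :=
  stmt_5_general D hD z₁ z₂ L γ hpath
end

section
/- In the plane ℝ², let D' = B(0,1) \ [0,1), and for 0 < t < 1/4 let x' = (1/2, t), y' = (1/2, -t). Then the quasihyperbolic distance satisfies k_{D'}(x', y') ≥ log(1 + 1/t). -/
open Metric Set

variable {E : Type*} [NormedAddCommGroup E] [NormedSpace ℝ E]

/-- The slit disk `B(0,1) \ [0,1)` in the Euclidean plane. -/
noncomputable def slitDisk : Set (EuclideanSpace ℝ (Fin 2)) :=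
  ball 0 1 \ {p | p 1 = 0 ∧ 0 ≤ p 0 ∧ p 0 < 1}

/-- The point of the Euclidean plane with coordinates `(a, b)`. -/
noncomputable def pt (a b : ℝ) : EuclideanSpace ℝ (Fin 2) :=
  (WithLp.equiv 2 (Fin 2 → ℝ)).symm ![a, b]

/-!
At time `s` an arc-length parametrized curve starting at `x` is at distance at most `d(x) + s`
from `∂D`, so a curve of length `L` has quasihyperbolic length at least
`∫₀ᴸ ds / (d(x) + s) = log (1 + L / d(x))`. For `x' = (1/2, t)` we have `d(x') ≤ t`, since
`(1/2, 0)` lies on the slit, and a curve from `x'` to `y' = (1/2, -t)` must cross the real axis at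
a point of negative abscissa, so `L ≥ 1/2 + 1/2`. The infimum defining `qhDist` is taken over a
nonempty family (an explicit polygonal detour), which matters because an empty infimum is `0`.
-/

open Real

namespace EuclideanSpace

lemma abs_apply_le_norm {ι : Type*} [Fintype ι] (p : EuclideanSpace ℝ ι) (i : ι) :
    |p i| ≤ ‖p‖ :=
  PiLp.norm_apply_le p i

lemma norm_le_abs_add_abs (p : EuclideanSpace ℝ (Fin 2)) : ‖p‖ ≤ |p 0| + |p 1| := by
  rw [EuclideanSpace.norm_eq, Fin.sum_univ_two, Real.norm_eq_abs, Real.norm_eq_abs,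
    sq_abs, sq_abs]
  refine Real.sqrt_le_iff.mpr ⟨by positivity, ?_⟩
  nlinarith [abs_mul_abs_self (p 0), abs_mul_abs_self (p 1), abs_nonneg (p 0), abs_nonneg (p 1)]

end EuclideanSpace

@[simp] lemma pt_apply_zero (a b : ℝ) : pt a b 0 = a := rfl

@[simp] lemma pt_apply_one (a b : ℝ) : pt a b 1 = b := rfl

lemma dist_pt_le (a b c d : ℝ) : dist (pt a b) (pt c d) ≤ |a - c| + |b - d| := by
  simpa [dist_eq_norm] using EuclideanSpace.norm_le_abs_add_abs (pt a b - pt c d)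

section QuasihyperbolicLength

variable {F : Type*} [NormedAddCommGroup F] {D : Set F} {x y : F} {γ : ℝ → F} {L s : ℝ}

lemma IsOpen.infDist_compl_pos (hD : IsOpen D) (hDc : Dᶜ.Nonempty) (hx : x ∈ D) :
    0 < infDist x Dᶜ :=
  (hD.isClosed_compl.notMem_iff_infDist_pos hDc).mp (not_not.mpr hx)

lemma IsQHPath.left_mem (hγ : IsQHPath D x y γ L) : x ∈ D :=
  hγ.2.2.1 ▸ hγ.2.2.2.2 0 ⟨le_rfl, hγ.1⟩

lemma IsQHPath.dist_left_le (hγ : IsQHPath D x y γ L) (hs : s ∈ Icc 0 L) :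
    dist x (γ s) ≤ s := by
  obtain ⟨hL, hlip, h0, -, -⟩ := hγ
  simpa [← h0, Real.dist_eq, abs_of_nonneg hs.1] using hlip.dist_le_mul 0 ⟨le_rfl, hL⟩ s hs

lemma IsQHPath.dist_right_le (hγ : IsQHPath D x y γ L) (hs : s ∈ Icc 0 L) :
    dist (γ s) y ≤ L - s := by
  obtain ⟨hL, hlip, -, hL', -⟩ := hγ
  simpa [← hL', Real.dist_eq, abs_of_nonpos (sub_nonpos.mpr hs.2)] using
    hlip.dist_le_mul s hs L ⟨hL, le_rfl⟩

theorem log_one_add_div_le_qhLength (hD : IsOpen D) (hDc : Dᶜ.Nonempty)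
    (hγ : IsQHPath D x y γ L) : log (1 + L / infDist x Dᶜ) ≤ qhLength D γ L := by
  obtain ⟨hL, hlip, -, -, hmem⟩ := id hγ
  set d := infDist x Dᶜ
  have hpos : ∀ z ∈ D, 0 < infDist z Dᶜ := fun _ => hD.infDist_compl_pos hDc
  have hd : 0 < d := hpos x hγ.left_mem
  have hle : ∀ s ∈ Icc 0 L, infDist (γ s) Dᶜ ≤ d + s := fun s hs =>
    infDist_le_infDist_add_dist.trans
      (add_le_add_right ((dist_comm _ _).le.trans (hγ.dist_left_le hs)) d)
  have hint : IntervalIntegrable (fun s => 1 / infDist (γ s) Dᶜ) MeasureTheory.volume 0 L := by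
    refine ContinuousOn.intervalIntegrable ?_
    rw [uIcc_of_le hL]
    exact continuousOn_const.div ((continuous_infDist_pt _).comp_continuousOn hlip.continuousOn)
      fun s hs => (hpos _ (hmem s hs)).ne'
  have hint' : IntervalIntegrable (fun s => 1 / (d + s)) MeasureTheory.volume 0 L := by
    refine ContinuousOn.intervalIntegrable ?_
    rw [uIcc_of_le hL]
    exact continuousOn_const.div (continuousOn_const.add continuousOn_id)
      fun s hs => (add_pos_of_pos_of_nonneg hd hs.1).ne'
  calc log (1 + L / d) = ∫ s in (0 : ℝ)..L, 1 / (d + s) := by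
        simp_rw [add_comm d]
        rw [intervalIntegral.integral_comp_add_right (fun s => 1 / s), zero_add,
          integral_one_div_of_pos hd (by linarith)]
        congr 1
        field_simp
        ring
    _ ≤ qhLength D γ L :=
        intervalIntegral.integral_mono_on hL hint' hint fun s hs =>
          one_div_le_one_div_of_le (hpos _ (hmem s hs)) (hle s hs)

end QuasihyperbolicLength

section SlitDisk

lemma slitDisk_eq : slitDisk = ball 0 1 \ {p | p 1 = 0 ∧ 0 ≤ p 0} := by
  ext p
  simp only [slitDisk, mem_sdiff, mem_ball, dist_zero_right, mem_ofPred_eq, and_congr_right_iff]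
  intro hp
  have : p 0 < 1 := (le_abs_self _).trans_lt ((EuclideanSpace.abs_apply_le_norm p 0).trans_lt hp)
  simp [this]

lemma isOpen_slitDisk : IsOpen slitDisk := by
  rw [slitDisk_eq]
  exact isOpen_ball.sdiff ((isClosed_eq (EuclideanSpace.proj 1).continuous continuous_const).inter
    (isClosed_le continuous_const (EuclideanSpace.proj 0).continuous))

lemma pt_notMem_slitDisk {a : ℝ} (ha : 0 ≤ a) : pt a 0 ∉ slitDisk := by
  simp [slitDisk_eq, ha]

lemma infDist_pt_compl_slitDisk_le {a : ℝ} (ha : 0 ≤ a) (b : ℝ) :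
    infDist (pt a b) slitDiskᶜ ≤ |b| :=
  (infDist_le_dist_of_mem (pt_notMem_slitDisk ha)).trans (by simpa using dist_pt_le a b a 0)

lemma add_le_of_isQHPath_slitDisk {x y : EuclideanSpace ℝ (Fin 2)}
    {γ : ℝ → EuclideanSpace ℝ (Fin 2)} {L : ℝ} (hx : 0 ≤ x 1) (hy : y 1 ≤ 0)
    (hγ : IsQHPath slitDisk x y γ L) : x 0 + y 0 ≤ L := by
  obtain ⟨hL, hlip, h0, hL', hmem⟩ := id hγ
  obtain ⟨s, hs, hs1⟩ : ∃ s ∈ Icc 0 L, γ s 1 = 0 :=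
    intermediate_value_Icc' hL ((EuclideanSpace.proj 1).continuous.comp_continuousOn
      hlip.continuousOn) ⟨by simpa [hL'] using hy, by simpa [h0] using hx⟩
  have hneg : γ s 0 < 0 := by
    have := hmem s hs
    simp only [slitDisk_eq, mem_sdiff, mem_ofPred_eq, hs1, true_and, not_le] at this
    exact this.2
  have hx0 : x 0 - γ s 0 ≤ dist x (γ s) := by
    simpa [dist_eq_norm] using (le_abs_self _).trans (EuclideanSpace.abs_apply_le_norm (x - γ s) 0)
  have hy0 : y 0 - γ s 0 ≤ dist (γ s) y := by
    simpa [dist_comm _ y, dist_eq_norm] using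
      (le_abs_self _).trans (EuclideanSpace.abs_apply_le_norm (y - γ s) 0)
  linarith [hγ.dist_left_le hs, hγ.dist_right_le hs]

lemma lipschitzWith_one_pt_of_monotone {A B C : ℝ → ℝ} (hA : Monotone A) (hB : Monotone B)
    (hC : Monotone C) (hsum : ∀ s, A s + B s + C s = s) (a b : ℝ) :
    LipschitzWith 1 fun s => pt (a - A s + C s) (b - B s) := by
  refine LipschitzWith.of_dist_le_mul fun s u => ?_
  wlog h : u ≤ s generalizing s u
  · rw [dist_comm, dist_comm s]
    exact this u s (le_of_not_ge h)
  have hAsu := hA h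
  have hBsu := hB h
  have hCsu := hC h
  calc _ ≤ |a - A s + C s - (a - A u + C u)| + |b - B s - (b - B u)| := dist_pt_le _ _ _ _
    _ ≤ (A s - A u + (C s - C u)) + (B s - B u) := by
        refine add_le_add (abs_le.2 ⟨?_, ?_⟩) (abs_le.2 ⟨?_, ?_⟩) <;> linarith
    _ = s - u := by linarith [hsum s, hsum u]
    _ = 1 * dist s u := by rw [one_mul, Real.dist_eq, abs_of_nonneg (sub_nonneg.2 h)]

/-- Left along height `t` to abscissa `-1/4`, down across the negative real axis, and back right
along height `-t`; the three clamped terms are the distances covered on the three legs. -/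
noncomputable def slitDetour (t s : ℝ) : EuclideanSpace ℝ (Fin 2) :=
  pt (1 / 2 - min s (3 / 4) + max (s - 3 / 4 - 2 * t) 0) (t - min (max (s - 3 / 4) 0) (2 * t))

lemma isQHPath_slitDetour {t : ℝ} (ht0 : 0 < t) (ht : t < 1 / 4) :
    IsQHPath slitDisk (pt (1 / 2) t) (pt (1 / 2) (-t)) (slitDetour t) (3 / 2 + 2 * t) := by
  refine ⟨by positivity, ?_, ?_, ?_, fun s ⟨hs0, hsL⟩ => ?_⟩
  · refine (lipschitzWith_one_pt_of_monotone (fun _ _ h => min_le_min_right _ h)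
      (fun _ _ h => min_le_min_right _ (max_le_max_right _ (by linarith)))
      (fun _ _ h => max_le_max_right _ (by linarith)) (fun s => ?_) _ _).lipschitzOnWith
    simp only [min_def, max_def]
    split_ifs <;> linarith
  · simp only [slitDetour]
    congr 1 <;> simp only [min_def, max_def] <;> split_ifs <;> linarith
  · simp only [slitDetour]
    congr 1 <;> simp only [min_def, max_def] <;> split_ifs <;> linarith
  · have hx : |1 / 2 - min s (3 / 4) + max (s - 3 / 4 - 2 * t) 0| ≤ 1 / 2 := by
      rw [abs_le]; simp only [min_def, max_def]; split_ifs <;> constructor <;> linarith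
    have hy : |t - min (max (s - 3 / 4) 0) (2 * t)| ≤ t := by
      rw [abs_le]; simp only [min_def, max_def]; split_ifs <;> constructor <;> linarith
    rw [slitDisk_eq, slitDetour]
    refine ⟨mem_ball_zero_iff.2 ((EuclideanSpace.norm_le_abs_add_abs _).trans_lt ?_), ?_⟩
    · simp only [pt_apply_zero, pt_apply_one]
      linarith
    · simp only [mem_ofPred_eq, pt_apply_zero, pt_apply_one, min_def, max_def]
      split_ifs <;> intro h <;> linarith [h.1, h.2]

end SlitDisk

theorem stmt_14 (t : ℝ) (ht0 : 0 < t) (ht : t < 1 / 4) :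
    Real.log (1 + 1 / t) ≤ qhDist slitDisk (pt (1 / 2) t) (pt (1 / 2) (-t)) := by
  have : Nonempty {p : (ℝ → EuclideanSpace ℝ (Fin 2)) × ℝ //
      IsQHPath slitDisk (pt (1 / 2) t) (pt (1 / 2) (-t)) p.1 p.2} :=
    ⟨⟨(slitDetour t, 3 / 2 + 2 * t), isQHPath_slitDetour ht0 ht⟩⟩
  refine le_ciInf fun ⟨(γ, L), hγ⟩ => ?_
  have hDc : slitDiskᶜ.Nonempty := ⟨_, pt_notMem_slitDisk le_rfl⟩
  have hL : 1 ≤ L := by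
    have h := add_le_of_isQHPath_slitDisk (by simpa using ht0.le) (by simpa using ht0.le) hγ
    simp only [pt_apply_zero] at h
    linarith
  have hd : infDist (pt (1 / 2) t) slitDiskᶜ ≤ t :=
    (infDist_pt_compl_slitDisk_le (by norm_num) t).trans_eq (abs_of_pos ht0)
  have hd0 : 0 < infDist (pt (1 / 2) t) slitDiskᶜ :=
    isOpen_slitDisk.infDist_compl_pos hDc hγ.left_mem
  calc Real.log (1 + 1 / t) ≤ Real.log (1 + L / infDist (pt (1 / 2) t) slitDiskᶜ) := by gcongr
    _ ≤ qhLength slitDisk γ L := log_one_add_div_le_qhLength isOpen_slitDisk hDc hγ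
end
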